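/- There do not exist a positive-edge-weighted tree T with four distinguished leaves a, b, c, d and reals 0 ≤ d_min ≤ d_max such that d_min ≤ d_T(b,c) ≤ d_max, d_min ≤ d_T(c,d) ≤ d_max, d_min ≤ d_T(b,d) ≤ d_max, d_T(a,c) < d_min, d_T(a,d) < d_min, and d_T(a,b) > d_max; that is, the forbidden coloring f-c(K_3 ∪ K_1), with the triangle on {b,c,d} and the isolated node a, is not realizable. -/

import Mathlib

open SimpleGraph

/-- A tree with positive real edge weights. -/
structure WTree (α : Type) where
  g : SimpleGraph α
  isTree : g.IsTree
  w : α → α → ℝ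
  w_symm : ∀ a b, w a b = w b a
  w_pos : ∀ a b, g.Adj a b → 0 < w a b

/-- The weighted distance between two vertices of a weighted tree: the sum of
the weights of the edges on the unique path between them. -/
noncomputable def WTree.dist {α : Type} (T : WTree α) (u v : α) : ℝ :=
  (((T.isTree.existsUnique_path u v).exists.choose).darts.map
    (fun d => T.w d.toProd.1 d.toProd.2)).sum

/-- A vertex of a weighted tree is a leaf if it has exactly one neighbor. -/
def WTree.IsLeaf {α : Type} (T : WTree α) (v : α) : Prop :=
  ∃! u, T.g.Adj v u

/-- `G = PCG(T, dmin, dmax)` via the leaf-assignment `f`. -/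
def IsPCGWith {V β : Type} (G : SimpleGraph V) (T : WTree β) (f : V → β)
    (dmin dmax : ℝ) : Prop :=
  Function.Injective f ∧ (∀ v, T.IsLeaf (f v)) ∧ (∀ b, T.IsLeaf b → ∃ v, f v = b) ∧
    ∀ u v : V, u ≠ v →
      (G.Adj u v ↔ dmin ≤ T.dist (f u) (f v) ∧ T.dist (f u) (f v) ≤ dmax)

/-- A graph is a pairwise compatibility graph. -/
def IsPCG {V : Type} (G : SimpleGraph V) : Prop :=
  ∃ (β : Type) (T : WTree β) (f : V → β) (dmin dmax : ℝ),
    0 ≤ dmin ∧ dmin ≤ dmax ∧ IsPCGWith G T f dmin dmax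

namespace WTree
variable {α : Type} (T : WTree α)

noncomputable def wsum {u v : α} (p : T.g.Walk u v) : ℝ :=
  (p.darts.map (fun d => T.w d.toProd.1 d.toProd.2)).sum

lemma wsum_append {u v x : α} (p : T.g.Walk u v) (q : T.g.Walk v x) :
    T.wsum (p.append q) = T.wsum p + T.wsum q := by
  simp [wsum, SimpleGraph.Walk.darts_append]

lemma wsum_nonneg {u v : α} (p : T.g.Walk u v) : 0 ≤ T.wsum p := by
  apply List.sum_nonneg
  intro x hx
  simp only [List.mem_map] at hx
  obtain ⟨d, _, rfl⟩ := hx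
  exact (T.w_pos _ _ d.adj).le

lemma dist_eq {u v : α} (p : T.g.Walk u v) (hp : p.IsPath) : T.dist u v = T.wsum p := by
  have h := T.isTree.existsUnique_path u v
  have he : h.exists.choose = p := h.unique h.exists.choose_spec hp
  show ((h.exists.choose).darts.map (fun d => T.w d.toProd.1 d.toProd.2)).sum = _
  rw [he]; rfl

lemma wsum_reverse {u v : α} (p : T.g.Walk u v) : T.wsum p.reverse = T.wsum p := by
  rw [wsum, SimpleGraph.Walk.darts_reverse, List.map_reverse, List.sum_reverse, List.map_map]
  rw [wsum]
  congr 1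
  apply List.map_congr_left
  intro d _
  exact T.w_symm _ _

lemma dist_symm (u v : α) : T.dist u v = T.dist v u := by
  obtain ⟨p, hp, -⟩ := T.isTree.existsUnique_path u v
  rw [T.dist_eq p hp, T.dist_eq p.reverse hp.reverse, wsum_reverse]

lemma dist_split {u v x : α} (p : T.g.Walk u v) (hp : p.IsPath) (hx : x ∈ p.support) :
    T.dist u v = T.dist u x + T.dist x v := by
  classical
  rw [T.dist_eq _ (hp.takeUntil hx), T.dist_eq _ (hp.dropUntil hx), ← wsum_append,
    SimpleGraph.Walk.take_spec p hx, T.dist_eq p hp]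

noncomputable def we : Sym2 α → ℝ := Sym2.lift ⟨T.w, fun a b => T.w_symm a b⟩

lemma wsum_eq_edges {u v : α} (p : T.g.Walk u v) : T.wsum p = (p.edges.map T.we).sum := by
  rw [wsum, SimpleGraph.Walk.edges, List.map_map]
  congr 1

lemma sum_le_of_sublist {l₁ l₂ : List ℝ} (h : List.Sublist l₁ l₂) (h0 : ∀ x ∈ l₂, 0 ≤ x) :
    l₁.sum ≤ l₂.sum := by
  induction h with
  | slnil => simp
  | cons a h ih =>
    simp only [List.sum_cons]
    have := ih (fun x hx => h0 x (List.mem_cons_of_mem _ hx))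
    have := h0 a List.mem_cons_self
    linarith
  | cons_cons a h ih =>
    simp only [List.sum_cons]
    have := ih (fun x hx => h0 x (List.mem_cons_of_mem _ hx))
    linarith

lemma dist_le_wsum {u v : α} (W : T.g.Walk u v) : T.dist u v ≤ T.wsum W := by
  classical
  rw [T.dist_eq W.bypass W.bypass_isPath, wsum_eq_edges, wsum_eq_edges]
  have hsub : W.bypass.edges ⊆ W.edges := SimpleGraph.Walk.edges_bypass_subset W
  have hnd : W.bypass.edges.Nodup := W.bypass_isPath.isTrail.edges_nodup
  obtain ⟨l, hperm, hsl⟩ := hnd.subperm hsub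
  have h0 : ∀ x ∈ W.edges.map T.we, 0 ≤ x := by
    intro x hx
    simp only [List.mem_map] at hx
    obtain ⟨e, he, rfl⟩ := hx
    have hadj := SimpleGraph.Walk.edges_subset_edgeSet W he
    induction e with
    | h a b => exact (T.w_pos a b hadj).le
  calc (W.bypass.edges.map T.we).sum = (l.map T.we).sum := ((hperm.map T.we).sum_eq).symm
    _ ≤ (W.edges.map T.we).sum := sum_le_of_sublist (hsl.map T.we) h0

lemma dist_triangle (u x v : α) : T.dist u v ≤ T.dist u x + T.dist x v := by
  obtain ⟨p, hp, -⟩ := T.isTree.existsUnique_path u x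
  obtain ⟨q, hq, -⟩ := T.isTree.existsUnique_path x v
  calc T.dist u v ≤ T.wsum (p.append q) := T.dist_le_wsum _
    _ = T.dist u x + T.dist x v := by rw [wsum_append, T.dist_eq p hp, T.dist_eq q hq]

lemma isPath_append {u v x : α} {p : T.g.Walk u v} {q : T.g.Walk v x}
    (hp : p.IsPath) (hq : q.IsPath) (h : ∀ y ∈ p.support, y ∈ q.support → y = v) :
    (p.append q).IsPath := by
  rw [SimpleGraph.Walk.isPath_def, SimpleGraph.Walk.support_append]
  apply List.Nodup.append hp.support_nodup
    (hq.support_nodup.sublist (List.tail_sublist _))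
  intro y hyp hyt
  have hyq : y ∈ q.support := List.mem_of_mem_tail hyt
  have := h y hyp hyq
  subst this
  have := hq.support_nodup
  rw [SimpleGraph.Walk.support_eq_cons q] at this
  exact (List.nodup_cons.mp this).1 hyt

lemma exists_meet {c a b : α} (r : T.g.Walk c a) (p : T.g.Walk a b) :
    ∃ (x : α) (q : T.g.Walk c x) (q' : T.g.Walk x a),
      r = q.append q' ∧ x ∈ p.support ∧ ∀ y ∈ q.support, y ∈ p.support → y = x := by
  induction r with
  | nil =>
    refine ⟨_, .nil, .nil, rfl, p.start_mem_support, ?_⟩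
    intro y hy _
    simpa using hy
  | @cons c c' a h r' ih =>
    by_cases hc : c ∈ p.support
    · refine ⟨c, .nil, .cons h r', rfl, hc, ?_⟩
      intro y hy _
      simpa using hy
    · obtain ⟨x, q, q', hr, hx, hmeet⟩ := ih p
      refine ⟨x, .cons h q, q', by rw [SimpleGraph.Walk.cons_append, hr], hx, ?_⟩
      intro y hy hyp
      rw [SimpleGraph.Walk.support_cons, List.mem_cons] at hy
      rcases hy with rfl | hy
      · exact absurd hyp hc
      · exact hmeet y hy hyp

lemma median {a b : α} (c : α) (p : T.g.Walk a b) (hp : p.IsPath) : ∃ x ∈ p.support,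
    T.dist a b = T.dist a x + T.dist x b ∧
    T.dist a c = T.dist a x + T.dist x c ∧
    T.dist b c = T.dist b x + T.dist x c := by
  classical
  obtain ⟨r, hr, -⟩ := T.isTree.existsUnique_path c a
  obtain ⟨x, q, q', hreq, hx, hmeet⟩ := T.exists_meet r p
  rw [hreq] at hr
  have hq : q.IsPath := hr.of_append_left
  have hq' : q'.IsPath := hr.of_append_right
  have hca : T.dist c a = T.dist c x + T.dist x a := by
    rw [T.dist_eq _ hr, wsum_append, T.dist_eq q hq, T.dist_eq q' hq']
  have hcbpath : (q.append (p.dropUntil x hx)).IsPath := by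
    apply T.isPath_append hq (hp.dropUntil hx)
    intro y hyq hyd
    exact hmeet y hyq (SimpleGraph.Walk.support_dropUntil_subset p hx hyd)
  have hcb : T.dist c b = T.dist c x + T.dist x b := by
    rw [T.dist_eq _ hcbpath, wsum_append, T.dist_eq q hq,
      T.dist_eq _ (hp.dropUntil hx)]
  refine ⟨x, hx, T.dist_split p hp hx, ?_, ?_⟩
  · rw [T.dist_symm a c, T.dist_symm a x, T.dist_symm x c, hca]; ring
  · rw [T.dist_symm b c, T.dist_symm b x, T.dist_symm x c, hcb]; ring

lemma order {u v x y : α} (p : T.g.Walk u v) (hp : p.IsPath) (hx : x ∈ p.support)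
    (hy : y ∈ p.support) :
    T.dist u v = T.dist u x + T.dist x y + T.dist y v ∨
    T.dist u v = T.dist u y + T.dist y x + T.dist x v := by
  classical
  have hsplit := T.dist_split p hp hx
  have hy' : y ∈ (p.takeUntil x hx).support ∨ y ∈ (p.dropUntil x hx).support := by
    rw [← SimpleGraph.Walk.take_spec p hx] at hy
    exact (SimpleGraph.Walk.mem_support_append_iff _ _).mp hy
  rcases hy' with hy' | hy'
  · right
    have := T.dist_split _ (hp.takeUntil hx) hy'
    linarith
  · left
    have := T.dist_split _ (hp.dropUntil hx) hy'
    linarith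

end WTree

theorem forbidden_K3_union_K1 : ¬ ∃ (β : Type) (T : WTree β) (a b c d : β) (dmin dmax : ℝ),
    T.IsLeaf a ∧ T.IsLeaf b ∧ T.IsLeaf c ∧ T.IsLeaf d ∧
    a ≠ b ∧ a ≠ c ∧ a ≠ d ∧ b ≠ c ∧ b ≠ d ∧ c ≠ d ∧
    0 ≤ dmin ∧ dmin ≤ dmax ∧
    dmin ≤ T.dist b c ∧ T.dist b c ≤ dmax ∧
    dmin ≤ T.dist c d ∧ T.dist c d ≤ dmax ∧
    dmin ≤ T.dist b d ∧ T.dist b d ≤ dmax ∧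
    T.dist a c < dmin ∧ T.dist a d < dmin ∧
    dmax < T.dist a b := by
  rintro ⟨β, T, a, b, c, d, dmin, dmax, -, -, -, -, -, -, -, -, -, -, -, _hmm,
    _hbc1, hbc2, hcd1, _hcd2, _hbd1, hbd2, hac, had, hab⟩
  obtain ⟨p, hp, -⟩ := T.isTree.existsUnique_path c d
  obtain ⟨m, hm, h1, h2, h3⟩ := T.median a p hp
  obtain ⟨m', hm', h1', h2', h3'⟩ := T.median b p hp
  have tri1 : T.dist a b ≤ T.dist a m + T.dist m b := T.dist_triangle a m b
  have tri2 : T.dist m b ≤ T.dist m m' + T.dist m' b := T.dist_triangle m m' b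
  have s1 : T.dist m c = T.dist c m := T.dist_symm m c
  have s2 : T.dist m' c = T.dist c m' := T.dist_symm m' c
  have s3 : T.dist m' b = T.dist b m' := T.dist_symm m' b
  have s4 : T.dist m' m = T.dist m m' := T.dist_symm m' m
  have s5 : T.dist m d = T.dist d m := T.dist_symm m d
  have s6 : T.dist m' d = T.dist d m' := T.dist_symm m' d
  have s7 : T.dist m a = T.dist a m := T.dist_symm m a
  have s8 : T.dist a d = T.dist d a := T.dist_symm a d
  have s9 : T.dist b c = T.dist c b := T.dist_symm b c
  have s10 : T.dist a c = T.dist c a := T.dist_symm a c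
  have s11 : T.dist b d = T.dist d b := T.dist_symm b d
  rcases T.order p hp hm hm' with ho | ho
  · -- d(a,b)+d(c,d) ≤ d(a,d)+d(b,c), contradiction with hcd1, hab, had, hbc2
    linarith
  · -- d(a,b)+d(c,d) ≤ d(a,c)+d(b,d), contradiction with hcd1, hab, hac, hbd2
    linarith
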